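/- Let Z(x) = Σ_{k=1}^l γ_k e^{λ_k x} be real-valued on (0,∞) (i.e. Z(x) ∈ ℝ for all x > 0), with Re λ_k < 0. Then for every s > 0, lim_{ε→0⁺} Im ∫₀^∞ Z(x)/((-s + iε) + x) dx = -π Z(s). -/

import Mathlib

/-!
For real `Z`, the imaginary part of `Z x / (x - s + iε)` is `-π Z x` times the Cauchy density
of location `s` and scale `ε`. These densities are the rescalings of a single integrable density
whose tails decay faster than `1 / |x|`, so they form an approximate identity as `ε → 0⁺`;
since `Z` is continuous and integrable on `(0, ∞)`, the integrals converge to `-π Z s`.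
-/

open MeasureTheory Set Complex Filter ProbabilityTheory

lemma tendsto_norm_mul_cauchyPDFReal_cobounded :
    Tendsto (fun x : ℝ => ‖x‖ * cauchyPDFReal 0 1 x) (Bornology.cobounded ℝ) (nhds 0) := by
  have hbound (x : ℝ) : ‖x‖ * cauchyPDFReal 0 1 x ≤ Real.pi⁻¹ * ‖x‖⁻¹ := by
    rcases eq_or_ne x 0 with rfl | hx
    · simp
    have hx : 0 < |x| := abs_pos.2 hx
    have hsq : |x| * |x| = x ^ 2 := by rw [← sq, sq_abs]
    rw [cauchyPDFReal_def, Real.norm_eq_abs]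
    push_cast
    rw [sub_zero, one_pow, ← div_eq_mul_inv, ← div_eq_mul_inv, mul_div_assoc',
      div_le_div_iff₀ (by positivity) hx]
    field_simp
    nlinarith
  refine squeeze_zero (fun x => ?_) hbound ?_
  · rw [cauchyPDFReal_def]
    positivity
  · rw [← mul_zero Real.pi⁻¹]
    exact (tendsto_inv_atTop_zero.comp tendsto_norm_cobounded_atTop).const_mul Real.pi⁻¹

lemma cauchyPDFReal_eq_inv_mul_cauchyPDFReal_zero_one (x₀ x : ℝ) {ε : ℝ} (hε : 0 < ε) :
    cauchyPDFReal x₀ ε.toNNReal x = ε⁻¹ * cauchyPDFReal 0 1 (ε⁻¹ * (x₀ - x)) := by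
  rw [cauchyPDFReal_def', cauchyPDFReal_def', NNReal.coe_inv, Real.coe_toNNReal _ hε.le]
  simp only [NNReal.coe_one, inv_one, mul_one, div_one, sub_zero]
  ring

theorem tendsto_integral_cauchyPDFReal_smul {E : Type*} [NormedAddCommGroup E] [NormedSpace ℝ E]
    [CompleteSpace E] {g : ℝ → E} {x₀ : ℝ} (hg : Integrable g) (hgx₀ : ContinuousAt g x₀) :
    Tendsto (fun ε : ℝ => ∫ x, cauchyPDFReal x₀ ε.toNNReal x • g x) (nhdsWithin 0 (Ioi 0))
      (nhds (g x₀)) := by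
  have h := (tendsto_integral_comp_smul_smul_of_integrable' (μ := volume)
    (fun x => by rw [cauchyPDFReal_def]; positivity) (integral_cauchyPDFReal_eq_one 0 one_ne_zero)
    (by simpa using tendsto_norm_mul_cauchyPDFReal_cobounded) hg hgx₀).comp tendsto_inv_nhdsGT_zero
  refine h.congr' ?_
  filter_upwards [self_mem_nhdsWithin] with ε (hε : 0 < ε)
  simp [cauchyPDFReal_eq_inv_mul_cauchyPDFReal_zero_one _ _ hε]

lemma im_div_neg_add_mul_I_add {z : ℂ} (hz : z.im = 0) (s x : ℝ) {ε : ℝ} (hε : 0 ≤ ε) :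
    (z / ((-(s:ℂ) + ε * I) + x)).im = cauchyPDFReal s ε.toNNReal x * (-Real.pi * z.re) := by
  rw [div_im, hz, normSq_apply, cauchyPDFReal_def, Real.coe_toNNReal _ hε]
  simp only [add_re, neg_re, ofReal_re, mul_re, I_re, mul_zero, ofReal_im, I_im, mul_one, sub_self,
    add_zero, add_im, neg_im, mul_im, zero_mul, zero_div, zero_sub, neg_zero, zero_add]
  have hπ : Real.pi ≠ 0 := Real.pi_ne_zero
  rw [show (-s + x) * (-s + x) + ε * ε = (x - s) ^ 2 + ε ^ 2 by ring]
  field_simp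

lemma MeasureTheory.Integrable.div_add_ofReal {μ : Measure ℝ} {f : ℝ → ℂ} (hf : Integrable f μ)
    {c : ℂ} (hc : c.im ≠ 0) : Integrable (fun x : ℝ => f x / (c + x)) μ := by
  have hlower (x : ℝ) : |c.im| ≤ ‖c + x‖ := by simpa using abs_im_le_norm (c + x)
  have hne (x : ℝ) : c + x ≠ 0 := norm_pos_iff.1 ((abs_pos.2 hc).trans_le (hlower x))
  refine hf.mul_bdd (c := |c.im|⁻¹) ?_ (ae_of_all _ fun x => ?_)
  · exact ((continuous_const.add continuous_ofReal).inv₀ hne).aestronglyMeasurable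
  · rw [norm_inv]
    exact inv_anti₀ (abs_pos.2 hc) (hlower x)

lemma integrableOn_Ioi_sum_mul_cexp {ι : Type*} [Fintype ι] (γ lam : ι → ℂ)
    (hre : ∀ k, (lam k).re < 0) (c : ℝ) :
    IntegrableOn (fun x : ℝ => ∑ k, γ k * cexp (lam k * x)) (Ioi c) :=
  integrable_finsetSum _ fun k _ => (integrableOn_exp_mul_complex_Ioi (hre k) c).const_mul (γ k)

theorem main_inversion_formula (l : ℕ) (γ lam : Fin l → ℂ)
    (hre : ∀ k, (lam k).re < 0)
    (Z : ℝ → ℂ) (hZ : ∀ x : ℝ, Z x = ∑ k, γ k * Complex.exp (lam k * x))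
    (hreal : ∀ x : ℝ, 0 < x → (Z x).im = 0)
    (s : ℝ) (hs : 0 < s) :
    Tendsto (fun ε : ℝ =>
        (∫ x in Ioi (0:ℝ), Z x / ((-(s:ℂ) + ε * Complex.I) + x)).im)
      (nhdsWithin 0 (Ioi 0))
      (nhds (-Real.pi * (Z s).re)) := by
  have hZint : IntegrableOn Z (Ioi 0) := funext hZ ▸ integrableOn_Ioi_sum_mul_cexp γ lam hre 0
  have hZcont : Continuous Z := funext hZ ▸ by fun_prop
  set g := (Ioi 0).indicator fun x => -Real.pi * (Z x).re
  have hgint : Integrable g := (integrable_indicator_iff measurableSet_Ioi).2 (hZint.re.const_mul _)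
  have hgcont : ContinuousAt g s :=
    (continuous_const.mul (continuous_re.comp hZcont)).continuousAt.congr <|
      eventuallyEq_of_mem (Ioi_mem_nhds hs) fun x hx => (indicator_of_mem hx _).symm
  have hlim := tendsto_integral_cauchyPDFReal_smul hgint hgcont
  rw [show g s = -Real.pi * (Z s).re from indicator_of_mem hs _] at hlim
  refine hlim.congr' ?_
  filter_upwards [self_mem_nhdsWithin] with ε (hε : 0 < ε)
  have hint : IntegrableOn (fun x : ℝ => Z x / ((-(s:ℂ) + ε * I) + x)) (Ioi 0) :=
    hZint.div_add_ofReal (by simpa using hε.ne')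
  calc ∫ x, cauchyPDFReal s ε.toNNReal x • g x
      = ∫ x in Ioi 0, cauchyPDFReal s ε.toNNReal x * (-Real.pi * (Z x).re) := by
        simp_rw [g, ← indicator_smul_apply]
        exact integral_indicator measurableSet_Ioi
    _ = ∫ x in Ioi 0, (Z x / ((-(s:ℂ) + ε * I) + x)).im :=
        setIntegral_congr_fun measurableSet_Ioi fun x hx =>
          (im_div_neg_add_mul_I_add (hreal x hx) s x hε.le).symm
    _ = _ := integral_im hint
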